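/- arXiv:1807.08838 — 4 statements merged into one kernel-verified Lean document; each statement's English description precedes it below -/
import Mathlib

section
/- Let E₁ = (tr/n)⊗id and E₂ = id⊗(tr/m) denote the normalized partial traces on M_n(ℂ)⊗M_m(ℂ). For any state ρ on M_n⊗M_m one has D(ρ ‖ E₁E₂(ρ)) = D(ρ ‖ E₁(ρ)) + D(E₁(ρ) ‖ E₁E₂(ρ)), and consequently D(ρ ‖ E₁E₂(ρ)) ≤ D(ρ ‖ E₁(ρ)) + D(ρ ‖ E₂(ρ)). -/
open Matrix
open scoped ComplexOrder

/-- Matrix logarithm via the continuous functional calculus. -/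
noncomputable def matLog {d : Type*} [Fintype d] [DecidableEq d]
    (A : Matrix d d ℂ) : Matrix d d ℂ :=
  cfc Real.log A

/-- Quantum relative entropy `D(a‖b) = tr(a log a) - tr(a log b)` (real part). -/
noncomputable def relEnt {d : Type*} [Fintype d] [DecidableEq d]
    (a b : Matrix d d ℂ) : ℝ :=
  ((a * matLog a).trace - (a * matLog b).trace).re

/-- Normalized partial trace over the first tensor factor:
`E₁ = (tr/n) ⊗ id` on `M_n ⊗ M_m`. -/
noncomputable def E₁ {n m : ℕ} (ρ : Matrix (Fin n × Fin m) (Fin n × Fin m) ℂ) :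
    Matrix (Fin n × Fin m) (Fin n × Fin m) ℂ :=
  Matrix.of fun p q =>
    if p.1 = q.1 then (n : ℂ)⁻¹ * ∑ a : Fin n, ρ (a, p.2) (a, q.2) else 0

/-- Normalized partial trace over the second tensor factor:
`E₂ = id ⊗ (tr/m)` on `M_n ⊗ M_m`. -/
noncomputable def E₂ {n m : ℕ} (ρ : Matrix (Fin n × Fin m) (Fin n × Fin m) ℂ) :
    Matrix (Fin n × Fin m) (Fin n × Fin m) ℂ :=
  Matrix.of fun p q =>
    if p.2 = q.2 then (m : ℂ)⁻¹ * ∑ b : Fin m, ρ (p.1, b) (q.1, b) else 0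

/-!
With `σ₁`, `σ₂` the marginals of `ρ`, one has `E₁ ρ = 1 ⊗ σ₂ / n`, `E₂ ρ = σ₁ / m ⊗ 1` and
`E₁ (E₂ ρ) = 1 / (n m)`, so every logarithm in the statement is explicit and the chain rule is
bookkeeping: both sides equal `tr ρ log ρ + log (n m)`. The inequality then reduces to
subadditivity `tr σ₁ log σ₁ + tr σ₂ log σ₂ ≤ tr ρ log ρ`, i.e. to Klein's inequality
`D(ρ‖σ₁ ⊗ σ₂) ≥ 0`. In eigenbases `(uᵢ)` of `ρ` and `(vⱼ)` of `σ₁ ⊗ σ₂`, with eigenvalues `pᵢ`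
and `qⱼ`, Klein's inequality reads `∑ᵢⱼ |⟪uᵢ, vⱼ⟫|² pᵢ log qⱼ ≤ ∑ᵢ pᵢ log pᵢ`; the weights
`|⟪uᵢ, vⱼ⟫|²` form a doubly stochastic matrix, so it follows termwise from `log x ≤ x - 1`.
-/

open scoped Kronecker

namespace Matrix

variable {ι κ : Type*}

section Kronecker

variable [Fintype ι] [DecidableEq ι] [Fintype κ] [DecidableEq κ]

def kroneckerOneStarAlgHom (R : Type*) [CommSemiring R] [StarRing R] :
    Matrix ι ι R →⋆ₐ[R] Matrix (ι × κ) (ι × κ) R where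
  toFun A := A ⊗ₖ 1
  map_one' := one_kronecker_one
  map_mul' A B := by rw [← mul_kronecker_mul, mul_one]
  map_zero' := zero_kronecker _
  map_add' A B := add_kronecker _ _ _
  commutes' c := by simp [Algebra.algebraMap_eq_smul_one, smul_kronecker]
  map_star' A := by simp [star_eq_conjTranspose, conjTranspose_kronecker]

def oneKroneckerStarAlgHom (R : Type*) [CommSemiring R] [StarRing R] :
    Matrix κ κ R →⋆ₐ[R] Matrix (ι × κ) (ι × κ) R where
  toFun A := 1 ⊗ₖ A
  map_one' := one_kronecker_one
  map_mul' A B := by rw [← mul_kronecker_mul, mul_one]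
  map_zero' := kronecker_zero _
  map_add' A B := kronecker_add _ _ _
  commutes' c := by simp [Algebra.algebraMap_eq_smul_one, kronecker_smul]
  map_star' A := by simp [star_eq_conjTranspose, conjTranspose_kronecker]

lemma conj_diagonal_kronecker_one_add_one_kronecker {U₁ : Matrix ι ι ℂ} {U₂ : Matrix κ κ ℂ}
    (hU₁ : U₁ ∈ unitary (Matrix ι ι ℂ)) (hU₂ : U₂ ∈ unitary (Matrix κ κ ℂ))
    (a₁ : ι → ℂ) (a₂ : κ → ℂ) :
    (U₁ * diagonal a₁ * star U₁) ⊗ₖ (1 : Matrix κ κ ℂ)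
        + (1 : Matrix ι ι ℂ) ⊗ₖ (U₂ * diagonal a₂ * star U₂)
      = (U₁ ⊗ₖ U₂) * diagonal (fun x => a₁ x.1 + a₂ x.2) * star (U₁ ⊗ₖ U₂) := by
  have hsplit : diagonal (fun x : ι × κ => a₁ x.1 + a₂ x.2)
      = diagonal a₁ ⊗ₖ (1 : Matrix κ κ ℂ) + (1 : Matrix ι ι ℂ) ⊗ₖ diagonal a₂ := by
    rw [← diagonal_one, ← diagonal_one, diagonal_kronecker_diagonal, diagonal_kronecker_diagonal,
      diagonal_add]
    simp
  have hstar : star (U₁ ⊗ₖ U₂) = star U₁ ⊗ₖ star U₂ := conjTranspose_kronecker U₁ U₂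
  rw [hsplit, hstar, mul_add, add_mul, ← mul_kronecker_mul, ← mul_kronecker_mul,
    ← mul_kronecker_mul, ← mul_kronecker_mul, mul_one, mul_one,
    Unitary.mul_star_self_of_mem hU₁, Unitary.mul_star_self_of_mem hU₂]

end Kronecker

variable {R : Type*}

def partialTraceSnd [Fintype κ] [AddCommMonoid R] (ρ : Matrix (ι × κ) (ι × κ) R) :
    Matrix ι ι R :=
  of fun i i' => ∑ k, ρ (i, k) (i', k)

def partialTraceFst [Fintype ι] [AddCommMonoid R] (ρ : Matrix (ι × κ) (ι × κ) R) :
    Matrix κ κ R :=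
  of fun k k' => ∑ i, ρ (i, k) (i, k')

section Trace

variable [Fintype ι] [Fintype κ]

lemma trace_partialTraceSnd [AddCommMonoid R] (ρ : Matrix (ι × κ) (ι × κ) R) :
    ρ.partialTraceSnd.trace = ρ.trace := by
  simp [partialTraceSnd, trace, Fintype.sum_prod_type]

lemma trace_partialTraceFst [AddCommMonoid R] (ρ : Matrix (ι × κ) (ι × κ) R) :
    ρ.partialTraceFst.trace = ρ.trace := by
  simp [partialTraceFst, trace, Fintype.sum_prod_type_right]

lemma trace_mul_kronecker_one [Semiring R] [DecidableEq κ] (X : Matrix (ι × κ) (ι × κ) R)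
    (Z : Matrix ι ι R) :
    (X * (Z ⊗ₖ (1 : Matrix κ κ R))).trace = (X.partialTraceSnd * Z).trace := by
  simp only [trace, diag, mul_apply, kroneckerMap_apply, one_apply, partialTraceSnd, of_apply,
    Fintype.sum_prod_type, mul_ite, mul_one, mul_zero, Finset.sum_ite_eq', Finset.mem_univ,
    if_true, Finset.sum_mul]
  exact Finset.sum_congr rfl fun _ _ => Finset.sum_comm

lemma trace_mul_one_kronecker [Semiring R] [DecidableEq ι] (X : Matrix (ι × κ) (ι × κ) R)
    (Z : Matrix κ κ R) :
    (X * ((1 : Matrix ι ι R) ⊗ₖ Z)).trace = (X.partialTraceFst * Z).trace := by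
  simp only [trace, diag, mul_apply, kroneckerMap_apply, one_apply, partialTraceFst, of_apply,
    Fintype.sum_prod_type, ite_mul, one_mul, zero_mul, mul_ite, mul_zero, Finset.sum_ite_irrel,
    Finset.sum_const_zero, Finset.sum_ite_eq', Finset.mem_univ, if_true, Finset.sum_mul]
  rw [Finset.sum_comm]
  exact Finset.sum_congr rfl fun _ _ => Finset.sum_comm

end Trace

variable {𝕜 : Type*} [RCLike 𝕜]

lemma PosDef.partialTraceSnd [Fintype κ] [Nonempty κ] {ρ : Matrix (ι × κ) (ι × κ) 𝕜}
    (hρ : ρ.PosDef) : ρ.partialTraceSnd.PosDef := by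
  have : ρ.partialTraceSnd = ∑ k, ρ.submatrix (·, k) (·, k) := by
    ext; simp [Matrix.partialTraceSnd, sum_apply]
  rw [this]
  exact posDef_sum Finset.univ_nonempty fun k _ =>
    hρ.submatrix fun _ _ h => (Prod.mk.inj h).1

lemma PosDef.partialTraceFst [Fintype ι] [Nonempty ι] {ρ : Matrix (ι × κ) (ι × κ) 𝕜}
    (hρ : ρ.PosDef) : ρ.partialTraceFst.PosDef := by
  have : ρ.partialTraceFst = ∑ i, ρ.submatrix (i, ·) (i, ·) := by
    ext; simp [Matrix.partialTraceFst, sum_apply]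
  rw [this]
  exact posDef_sum Finset.univ_nonempty fun i _ =>
    hρ.submatrix fun _ _ h => (Prod.mk.inj h).2

section

variable [Fintype ι] [DecidableEq ι]

lemma IsHermitian.sum_eigenvalues_eq_one {A : Matrix ι ι ℂ} (hA : A.IsHermitian)
    (hA1 : A.trace = 1) : ∑ i, hA.eigenvalues i = 1 := by
  simpa [hA1] using (congrArg Complex.re hA.trace_eq_sum_eigenvalues).symm

lemma normSq_mem_doublyStochastic {U : Matrix ι ι ℂ} (hU : U ∈ unitary (Matrix ι ι ℂ)) :
    of (fun i j => Complex.normSq (U i j)) ∈ doublyStochastic ℝ ι := by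
  have sum_row : ∀ V ∈ unitary (Matrix ι ι ℂ), ∀ i, ∑ j, Complex.normSq (V i j) = 1 := by
    intro V hV i
    have h : (V * star V) i i = (1 : Matrix ι ι ℂ) i i := by
      rw [Unitary.mul_star_self_of_mem hV]
    simp only [mul_apply, star_apply, one_apply_eq, RCLike.star_def, Complex.mul_conj] at h
    exact_mod_cast h
  rw [mem_doublyStochastic_iff_sum]
  refine ⟨fun i j => Complex.normSq_nonneg _, sum_row U hU, fun j => ?_⟩
  simpa [star_apply, Complex.normSq_conj] using sum_row _ (Unitary.star_mem hU) j

lemma trace_conj_diagonal_mul_conj_diagonal (W V : Matrix ι ι ℂ) (a b : ι → ℝ) :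
    (W * diagonal (fun i => (a i : ℂ)) * star W *
        (V * diagonal (fun j => (b j : ℂ)) * star V)).trace
      = ((∑ i, ∑ j, Complex.normSq ((star W * V) i j) * (a i * b j) : ℝ) : ℂ) := by
  set M := star W * V
  have hcycle : (W * diagonal (fun i => (a i : ℂ)) * star W *
      (V * diagonal (fun j => (b j : ℂ)) * star V)).trace
      = (diagonal (fun i => (a i : ℂ)) * M * diagonal (fun j => (b j : ℂ)) * star M).trace := by
    rw [star_mul, star_star]
    simp only [Matrix.mul_assoc]
    rw [trace_mul_comm W]
    simp only [Matrix.mul_assoc, M]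
  rw [hcycle]
  simp only [trace, diag, mul_apply, diagonal_apply, ite_mul, zero_mul, mul_ite, mul_zero,
    Finset.sum_ite_eq, Finset.sum_ite_eq', Finset.mem_univ, if_true, star_apply, RCLike.star_def]
  push_cast
  refine Finset.sum_congr rfl fun i _ => Finset.sum_congr rfl fun j _ => ?_
  rw [← Complex.mul_conj]
  ring

lemma re_trace_mul_smul_one (X : Matrix ι ι ℂ) (c : ℝ) :
    (X * (c • (1 : Matrix ι ι ℂ))).trace.re = c * X.trace.re := by
  rw [Matrix.mul_smul, mul_one, trace_smul, Complex.real_smul, Complex.re_ofReal_mul]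

lemma re_trace_mul_smul_one_add (X Y : Matrix ι ι ℂ) (c : ℝ) :
    (X * (c • (1 : Matrix ι ι ℂ) + Y)).trace.re = c * X.trace.re + (X * Y).trace.re := by
  rw [mul_add, trace_add, Complex.add_re, re_trace_mul_smul_one]

end

end Matrix

section Gibbs

variable {ι : Type*} [Fintype ι] [DecidableEq ι]

lemma sum_mul_log_le_of_mem_doublyStochastic {B : Matrix ι ι ℝ} (hB : B ∈ doublyStochastic ℝ ι)
    {p q : ι → ℝ} (hp : ∀ i, 0 < p i) (hq : ∀ j, 0 < q j) (hp1 : ∑ i, p i = 1)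
    (hq1 : ∑ j, q j = 1) :
    ∑ i, ∑ j, B i j * (p i * Real.log (q j)) ≤ ∑ i, p i * Real.log (p i) := by
  have gibbs : ∀ i j, p i * Real.log (q j) ≤ p i * Real.log (p i) - p i + q j := fun i j => by
    have h := mul_le_mul_of_nonneg_left
      (Real.log_le_sub_one_of_pos (div_pos (hq j) (hp i))) (hp i).le
    rw [Real.log_div (hq j).ne' (hp i).ne', mul_sub, mul_sub, mul_div_cancel₀ _ (hp i).ne'] at h
    linarith
  calc ∑ i, ∑ j, B i j * (p i * Real.log (q j))
      ≤ ∑ i, ∑ j, B i j * (p i * Real.log (p i) - p i + q j) :=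
        Finset.sum_le_sum fun i _ => Finset.sum_le_sum fun j _ =>
          mul_le_mul_of_nonneg_left (gibbs i j) (nonneg_of_mem_doublyStochastic hB)
    _ = ∑ i, (p i * Real.log (p i) - p i) + ∑ j, q j := by
        simp only [mul_add, Finset.sum_add_distrib, ← Finset.sum_mul,
          sum_row_of_mem_doublyStochastic hB, one_mul]
        rw [Finset.sum_comm]
        simp only [← Finset.sum_mul, sum_col_of_mem_doublyStochastic hB, one_mul]
    _ = ∑ i, p i * Real.log (p i) := by
        rw [hq1, Finset.sum_sub_distrib, hp1]
        ring

end Gibbs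

section MatLog

variable {ι κ : Type*} [Fintype ι] [DecidableEq ι] [Fintype κ] [DecidableEq κ]

lemma matLog_eq_conj_diagonal {A : Matrix ι ι ℂ} (hA : A.IsHermitian) :
    matLog A = (hA.eigenvectorUnitary : Matrix ι ι ℂ) *
      diagonal (fun i => (Real.log (hA.eigenvalues i) : ℂ)) *
        star (hA.eigenvectorUnitary : Matrix ι ι ℂ) := by
  rw [matLog, hA.cfc_eq]
  rfl

lemma matLog_smul_one (c : ℝ) : matLog (c • (1 : Matrix ι ι ℂ)) = Real.log c • 1 := by
  rw [matLog]
  simpa only [Algebra.algebraMap_eq_smul_one] using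
    cfc_algebraMap (A := Matrix ι ι ℂ) c Real.log

lemma matLog_smul {A : Matrix ι ι ℂ} (hA : A.PosDef) {c : ℝ} (hc : 0 < c) :
    matLog (c • A) = Real.log c • 1 + matLog A := by
  have hA' : IsSelfAdjoint A := hA.isHermitian
  have hspec : ∀ x ∈ spectrum ℝ A, x ≠ 0 := by
    rw [hA.isHermitian.spectrum_real_eq_range_eigenvalues]
    rintro - ⟨i, rfl⟩
    exact (hA.eigenvalues_pos i).ne'
  rw [matLog, ← cfc_smul_id (R := ℝ) c A, ← cfc_comp Real.log (c • ·) A, matLog,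
    ← Algebra.algebraMap_eq_smul_one, ← cfc_const_add _ _ _]
  exact cfc_congr fun x hx => Real.log_mul hc.ne' (hspec x hx)

lemma matLog_map (φ : Matrix ι ι ℂ →⋆ₐ[ℂ] Matrix κ κ ℂ) {A : Matrix ι ι ℂ}
    (hA : A.IsHermitian) : matLog (φ A) = φ (matLog A) :=
  (φ.map_cfc Real.log A (by rw [continuousOn_iff_continuous_domRestrict]; fun_prop)
    (LinearMap.continuous_of_finiteDimensional φ.toLinearMap) hA (IsSelfAdjoint.map hA φ)).symm

lemma matLog_kronecker_one {A : Matrix ι ι ℂ} (hA : A.IsHermitian) :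
    matLog (A ⊗ₖ (1 : Matrix κ κ ℂ)) = matLog A ⊗ₖ 1 :=
  matLog_map (kroneckerOneStarAlgHom ℂ) hA

lemma matLog_one_kronecker {A : Matrix κ κ ℂ} (hA : A.IsHermitian) :
    matLog ((1 : Matrix ι ι ℂ) ⊗ₖ A) = 1 ⊗ₖ matLog A :=
  matLog_map (oneKroneckerStarAlgHom ℂ) hA

end MatLog

section Klein

variable {ι κ : Type*} [Fintype ι] [DecidableEq ι] [Fintype κ] [DecidableEq κ]

theorem re_trace_mul_conj_diagonal_log_le {ρ U : Matrix ι ι ℂ} (hρ : ρ.PosDef)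
    (hρ1 : ρ.trace = 1) (hU : U ∈ unitary (Matrix ι ι ℂ)) {q : ι → ℝ} (hq : ∀ j, 0 < q j)
    (hq1 : ∑ j, q j = 1) :
    (ρ * (U * diagonal (fun j => (Real.log (q j) : ℂ)) * star U)).trace.re
      ≤ (ρ * matLog ρ).trace.re := by
  have hH : ρ.IsHermitian := hρ.isHermitian
  set W : Matrix ι ι ℂ := (hH.eigenvectorUnitary : Matrix ι ι ℂ)
  set p := hH.eigenvalues
  have hW : W ∈ unitary (Matrix ι ι ℂ) := SetLike.coe_mem _
  have hρW : ρ = W * diagonal (fun i => (p i : ℂ)) * star W := hH.spectral_theorem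
  have hlog : matLog ρ = W * diagonal (fun i => (Real.log (p i) : ℂ)) * star W :=
    matLog_eq_conj_diagonal hH
  have hlhs : (ρ * (U * diagonal (fun j => (Real.log (q j) : ℂ)) * star U)).trace.re
      = ∑ i, ∑ j, Complex.normSq ((star W * U) i j) * (p i * Real.log (q j)) := by
    conv_lhs => rw [hρW]
    rw [trace_conj_diagonal_mul_conj_diagonal, Complex.ofReal_re]
  have hrhs : (ρ * matLog ρ).trace.re = ∑ i, p i * Real.log (p i) := by
    rw [hlog]
    conv_lhs => rw [hρW]
    rw [trace_conj_diagonal_mul_conj_diagonal, Complex.ofReal_re, Unitary.star_mul_self_of_mem hW]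
    simp [one_apply, apply_ite]
  rw [hlhs, hrhs]
  exact sum_mul_log_le_of_mem_doublyStochastic
    (normSq_mem_doublyStochastic (mul_mem (Unitary.star_mem hW) hU)) hρ.eigenvalues_pos hq
    (hH.sum_eigenvalues_eq_one hρ1) hq1

theorem re_trace_mul_matLog_partialTrace_add_le {ρ : Matrix (ι × κ) (ι × κ) ℂ}
    (hρ : ρ.PosDef) (hρ1 : ρ.trace = 1) :
    (ρ.partialTraceSnd * matLog ρ.partialTraceSnd).trace.re
        + (ρ.partialTraceFst * matLog ρ.partialTraceFst).trace.re
      ≤ (ρ * matLog ρ).trace.re := by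
  obtain ⟨i₀, k₀⟩ : Nonempty (ι × κ) := by
    by_contra h
    rw [not_nonempty_iff] at h
    simp [trace] at hρ1
  have : Nonempty ι := ⟨i₀⟩
  have : Nonempty κ := ⟨k₀⟩
  have h₁ := hρ.partialTraceSnd
  have h₂ := hρ.partialTraceFst
  set σ₁ := ρ.partialTraceSnd
  set σ₂ := ρ.partialTraceFst
  have hσ₁ : σ₁.trace = 1 := (trace_partialTraceSnd ρ).trans hρ1
  have hσ₂ : σ₂.trace = 1 := (trace_partialTraceFst ρ).trans hρ1
  set U₁ : Matrix ι ι ℂ := (h₁.isHermitian.eigenvectorUnitary : Matrix ι ι ℂ)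
  set U₂ : Matrix κ κ ℂ := (h₂.isHermitian.eigenvectorUnitary : Matrix κ κ ℂ)
  set p₁ := h₁.isHermitian.eigenvalues
  set p₂ := h₂.isHermitian.eigenvalues
  have hlog : matLog σ₁ ⊗ₖ 1 + 1 ⊗ₖ matLog σ₂
      = (U₁ ⊗ₖ U₂) * diagonal (fun x => (Real.log (p₁ x.1 * p₂ x.2) : ℂ)) * star (U₁ ⊗ₖ U₂) := by
    rw [matLog_eq_conj_diagonal h₁.isHermitian, matLog_eq_conj_diagonal h₂.isHermitian,
      conj_diagonal_kronecker_one_add_one_kronecker (SetLike.coe_mem _) (SetLike.coe_mem _)]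
    congr 3 with x
    rw [Real.log_mul (h₁.eigenvalues_pos x.1).ne' (h₂.eigenvalues_pos x.2).ne']
    push_cast
    rfl
  have hsum : ∑ x : ι × κ, p₁ x.1 * p₂ x.2 = 1 := by
    rw [Fintype.sum_prod_type, ← Finset.sum_mul_sum, h₁.isHermitian.sum_eigenvalues_eq_one hσ₁,
      h₂.isHermitian.sum_eigenvalues_eq_one hσ₂, one_mul]
  calc (σ₁ * matLog σ₁).trace.re + (σ₂ * matLog σ₂).trace.re
      = (ρ * (matLog σ₁ ⊗ₖ 1 + 1 ⊗ₖ matLog σ₂)).trace.re := by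
        rw [mul_add, trace_add, trace_mul_kronecker_one, trace_mul_one_kronecker, Complex.add_re]
    _ ≤ (ρ * matLog ρ).trace.re := by
        rw [hlog]
        exact re_trace_mul_conj_diagonal_log_le hρ hρ1
          (kronecker_mem_unitary (SetLike.coe_mem _) (SetLike.coe_mem _))
          (fun x => mul_pos (h₁.eigenvalues_pos x.1) (h₂.eigenvalues_pos x.2)) hsum

end Klein

section NormalizedPartialTraces

variable {n m : ℕ} (ρ : Matrix (Fin n × Fin m) (Fin n × Fin m) ℂ)

lemma E₁_eq_smul_one_kronecker : E₁ ρ = (n : ℝ)⁻¹ • (1 ⊗ₖ ρ.partialTraceFst) := by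
  ext ⟨a, b⟩ ⟨c, e⟩
  by_cases h : a = c <;> simp [E₁, partialTraceFst, one_apply, h, Complex.real_smul]

lemma E₂_eq_smul_kronecker_one : E₂ ρ = (m : ℝ)⁻¹ • (ρ.partialTraceSnd ⊗ₖ 1) := by
  ext ⟨a, b⟩ ⟨c, e⟩
  by_cases h : b = e <;> simp [E₂, partialTraceSnd, one_apply, h, Complex.real_smul, mul_comm]

lemma E₁_E₂_eq_smul_one (htr : ρ.trace = 1) :
    E₁ (E₂ ρ) = ((n : ℝ)⁻¹ * (m : ℝ)⁻¹) • (1 : Matrix (Fin n × Fin m) (Fin n × Fin m) ℂ) := by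
  have hsum : ∑ a : Fin n, ∑ b : Fin m, ρ (a, b) (a, b) = 1 := by
    rwa [trace, Fintype.sum_prod_type] at htr
  ext ⟨a, b⟩ ⟨c, e⟩
  by_cases h₁ : a = c <;> by_cases h₂ : b = e <;>
    simp [E₁, E₂, one_apply, h₁, h₂, ← Finset.mul_sum, hsum, Complex.real_smul]

lemma partialTraceFst_E₁ [NeZero n] : (E₁ ρ).partialTraceFst = ρ.partialTraceFst := by
  ext b e
  simp [E₁, partialTraceFst, NeZero.ne]

variable {ρ}

lemma matLog_E₁ [NeZero n] (hρ : ρ.PosDef) :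
    matLog (E₁ ρ) = Real.log (n : ℝ)⁻¹ • 1 + 1 ⊗ₖ matLog ρ.partialTraceFst := by
  have hσ := hρ.partialTraceFst
  rw [E₁_eq_smul_one_kronecker, matLog_smul (PosDef.one.kronecker hσ)
    (inv_pos.2 <| Nat.cast_pos.2 <| NeZero.pos n),
    matLog_one_kronecker hσ.isHermitian]

lemma matLog_E₂ [NeZero m] (hρ : ρ.PosDef) :
    matLog (E₂ ρ) = Real.log (m : ℝ)⁻¹ • 1 + matLog ρ.partialTraceSnd ⊗ₖ 1 := by
  have hσ := hρ.partialTraceSnd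
  rw [E₂_eq_smul_kronecker_one, matLog_smul (hσ.kronecker PosDef.one)
    (inv_pos.2 <| Nat.cast_pos.2 <| NeZero.pos m),
    matLog_kronecker_one hσ.isHermitian]

lemma matLog_E₁_E₂ (htr : ρ.trace = 1) :
    matLog (E₁ (E₂ ρ)) = Real.log ((n : ℝ)⁻¹ * (m : ℝ)⁻¹) • 1 := by
  rw [E₁_E₂_eq_smul_one ρ htr, matLog_smul_one]

end NormalizedPartialTraces

/-- Chain rule and subadditivity of relative entropy with respect to the two
normalized partial traces: for a full-rank state `ρ` on `M_n ⊗ M_m`,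
`D(ρ‖E₁E₂ρ) = D(ρ‖E₁ρ) + D(E₁ρ‖E₁E₂ρ)` and consequently
`D(ρ‖E₁E₂ρ) ≤ D(ρ‖E₁ρ) + D(ρ‖E₂ρ)`. -/
theorem stmt_8 {n m : ℕ} (ρ : Matrix (Fin n × Fin m) (Fin n × Fin m) ℂ)
    (hρ : ρ.PosDef) (htr : ρ.trace = 1) :
    relEnt ρ (E₁ (E₂ ρ)) = relEnt ρ (E₁ ρ) + relEnt (E₁ ρ) (E₁ (E₂ ρ)) ∧
      relEnt ρ (E₁ (E₂ ρ)) ≤ relEnt ρ (E₁ ρ) + relEnt ρ (E₂ ρ) := by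
  have : NeZero n := ⟨by rintro rfl; simp [trace] at htr⟩
  have : NeZero m := ⟨by rintro rfl; simp [trace] at htr⟩
  have htrE₁ : (E₁ ρ).trace = 1 := by
    rw [← trace_partialTraceFst, partialTraceFst_E₁, trace_partialTraceFst, htr]
  have hsub := re_trace_mul_matLog_partialTrace_add_le hρ htr
  simp only [relEnt, Complex.sub_re, matLog_E₁_E₂ htr, matLog_E₁ hρ, matLog_E₂ hρ,
    re_trace_mul_smul_one, re_trace_mul_smul_one_add, trace_mul_one_kronecker,
    trace_mul_kronecker_one, partialTraceFst_E₁, htr, htrE₁, Complex.one_re, mul_one]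
  rw [Real.log_mul (by simp [NeZero.ne]) (by simp [NeZero.ne])]
  constructor
  · ring
  · linarith
end

section
/- Let B be the n×n matrix B(j,k) = min(j,k). Then 4B ≥ Id in the positive semidefinite order, i.e. for every α ∈ ℂⁿ, Σ_l |α_l|² ≤ 4 Σ_{j,k} conj(α_j) α_k min(j,k). -/
/-!
Writing `S_l = ∑_{j ≥ l} α_j` for the tail sums, `min (j+1) (k+1)` counts the indices `l` with
`l ≤ j` and `l ≤ k`, so the quadratic form of `B` equals `∑_l |S_l|²`. Conversely
`α_l = S_l - S_{l+1}` with `S_n = 0`, and `|a - b|² ≤ 2|a|² + 2|b|²` bounds `∑_l |α_l|²`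
by `4 ∑_l |S_l|²`.
-/

open Finset

variable {n : ℕ}

def tailSum {M : Type*} [AddCommMonoid M] (α : Fin n → M) (l : ℕ) : M :=
  ∑ j : Fin n with l ≤ j.1, α j

theorem map_tailSum {M N F : Type*} [AddCommMonoid M] [AddCommMonoid N] [FunLike F M N]
    [AddMonoidHomClass F M N] (f : F) (α : Fin n → M) (l : ℕ) :
    tailSum (fun j => f (α j)) l = f (tailSum α l) :=
  (map_sum f α _).symm

theorem tailSum_self {M : Type*} [AddCommMonoid M] (α : Fin n → M) : tailSum α n = 0 :=
  sum_eq_zero fun j hj => absurd (mem_filter.mp hj).2 (not_le.mpr j.2)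

theorem tailSum_sub_tailSum_succ {G : Type*} [AddCommGroup G] (α : Fin n → G) (l : Fin n) :
    tailSum α l - tailSum α (l + 1) = α l := by
  have hIci : ({j : Fin n | l.1 ≤ j.1} : Finset (Fin n)) = Ici l := by
    ext j; simp only [mem_filter, mem_univ, true_and, mem_Ici, Fin.le_def]
  have hIoi : ({j : Fin n | l.1 + 1 ≤ j.1} : Finset (Fin n)) = Ioi l := by
    ext j; simp only [mem_filter, mem_univ, true_and, mem_Ioi, Fin.lt_def]; omega
  rw [tailSum, tailSum, hIci, hIoi, Ici_eq_cons_Ioi, sum_cons, add_sub_cancel_right]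

theorem filter_range_le_and_le (j k : Fin n) :
    {l ∈ range n | l ≤ j.1 ∧ l ≤ k.1} = range (min (j.1 + 1) (k.1 + 1)) := by
  ext l
  simp only [mem_filter, mem_range, Nat.lt_min, Nat.lt_succ_iff]
  omega

theorem sum_tailSum_mul_tailSum {R : Type*} [CommSemiring R] (a b : Fin n → R) :
    ∑ l ∈ range n, tailSum a l * tailSum b l =
      ∑ j, ∑ k, a j * b k * ((min (j.1 + 1) (k.1 + 1) : ℕ) : R) := by
  unfold tailSum
  simp_rw [sum_filter, sum_mul_sum]
  rw [sum_comm]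
  refine sum_congr rfl fun j _ => ?_
  rw [sum_comm]
  refine sum_congr rfl fun k _ => ?_
  simp_rw [ite_zero_mul_ite_zero]
  rw [← sum_filter, sum_const, filter_range_le_and_le, card_range, nsmul_eq_mul, mul_comm]

theorem sum_range_norm_sub_succ_sq_le {E : Type*} [SeminormedAddGroup E] (S : ℕ → E)
    (hS : S n = 0) :
    ∑ l ∈ range n, ‖S l - S (l + 1)‖ ^ 2 ≤ 4 * ∑ l ∈ range n, ‖S l‖ ^ 2 := by
  have hshift : ∑ l ∈ range n, ‖S (l + 1)‖ ^ 2 ≤ ∑ l ∈ range n, ‖S l‖ ^ 2 := by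
    have h := (sum_range_succ' (fun l => ‖S l‖ ^ 2) n).symm.trans (sum_range_succ _ n)
    rw [hS, norm_zero, zero_pow two_ne_zero, add_zero] at h
    linarith [sq_nonneg ‖S 0‖]
  calc ∑ l ∈ range n, ‖S l - S (l + 1)‖ ^ 2
      ≤ ∑ l ∈ range n, 2 * (‖S l‖ ^ 2 + ‖S (l + 1)‖ ^ 2) :=
        sum_le_sum fun l _ =>
          (pow_le_pow_left₀ (norm_nonneg _) (norm_sub_le _ _) 2).trans add_sq_le
    _ = 2 * ∑ l ∈ range n, ‖S l‖ ^ 2 + 2 * ∑ l ∈ range n, ‖S (l + 1)‖ ^ 2 := by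
        rw [← mul_add, ← sum_add_distrib, mul_sum]
    _ ≤ 4 * ∑ l ∈ range n, ‖S l‖ ^ 2 := by linarith

/-- For `B(j,k) = min(j,k)` one has `4B ≥ Id`:
`Σ_l |α_l|² ≤ 4 Σ_{j,k} conj(α_j) α_k min(j,k)`. -/
theorem stmt_10 (n : ℕ) (α : Fin n → ℂ) :
    ∑ l : Fin n, ‖α l‖ ^ 2 ≤
      4 * (∑ j : Fin n, ∑ k : Fin n,
        (starRingEnd ℂ) (α j) * α k * ((min (j.1 + 1) (k.1 + 1) : ℕ) : ℂ)).re := by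
  have hform : (∑ j : Fin n, ∑ k : Fin n,
      (starRingEnd ℂ) (α j) * α k * ((min (j.1 + 1) (k.1 + 1) : ℕ) : ℂ)).re =
        ∑ l ∈ range n, ‖tailSum α l‖ ^ 2 := by
    rw [← sum_tailSum_mul_tailSum]
    simp_rw [map_tailSum (starRingEnd ℂ) α, Complex.conj_mul', ← Complex.ofReal_pow, ← Complex.ofReal_sum, Complex.ofReal_re]
  have hdiff : ∑ l : Fin n, ‖α l‖ ^ 2 =
      ∑ l ∈ range n, ‖tailSum α l - tailSum α (l + 1)‖ ^ 2 := by
    rw [← Fin.sum_univ_eq_sum_range (fun l => ‖tailSum α l - tailSum α (l + 1)‖ ^ 2)]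
    simp_rw [tailSum_sub_tailSum_succ]
  rw [hform, hdiff]
  exact sum_range_norm_sub_succ_sq_le _ (tailSum_self α)
end

section
/- Let A be a self-adjoint positive semidefinite operator on a finite-dimensional Hilbert space with operator norm ‖A‖, let 0 < ε < 1, σ > 0, and define φ_{ε,σ}(λ) = |ln ε|^{-1}·(∫_ε^1 (1-e^{-λt})t^{-2} dt + ∫_1^∞ (1-e^{-λt}) t^{-1-σ} dt). Then ‖A - φ_{ε,σ}(A)‖ ≤ (2σ^{-1} + ‖A‖²)/(2|ln ε|), where φ_{ε,σ}(A) is defined by the functional calculus. -/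
/-!
For `λ ≥ 0`, integrating `λ/t - λ²/2 ≤ (1 - e^{-λt})/t² ≤ λ/t` over `[ε, 1]` and
`0 ≤ (1 - e^{-λt}) t^{-1-σ} ≤ t^{-1-σ}` over `(1, ∞)` gives
`λ - λ²/(2|ln ε|) ≤ φ_{ε,σ}(λ) ≤ λ + 1/(σ|ln ε|)`, hence `|λ - φ_{ε,σ}(λ)| ≤ (2σ⁻¹ + λ²)/(2|ln ε|)`.
The spectrum of `A` lies in `[0, ‖A‖]`, and the norm of `cfc (id - φ_{ε,σ}) A` is bounded by the
supremum of `|λ - φ_{ε,σ}(λ)|` over it (continuity of `φ_{ε,σ}` on the spectrum is automatic,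
the spectrum being finite).
-/

open Real Set MeasureTheory

lemma one_sub_exp_neg_le (y : ℝ) : 1 - exp (-y) ≤ y := by
  linarith [add_one_le_exp (-y)]

lemma one_sub_exp_neg_nonneg {y : ℝ} (hy : 0 ≤ y) : 0 ≤ 1 - exp (-y) := by
  linarith [exp_le_one_iff.mpr (neg_nonpos.mpr hy)]

lemma one_sub_exp_neg_le_one (y : ℝ) : 1 - exp (-y) ≤ 1 := by
  linarith [exp_pos (-y)]

lemma sub_sq_div_two_le_one_sub_exp_neg {y : ℝ} (hy : 0 ≤ y) :
    y - y ^ 2 / 2 ≤ 1 - exp (-y) := by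
  -- `exp (-y) ≤ 1 / (1 + y + y²/2) ≤ 1 - y + y²/2`, as `(1 + y + y²/2)(1 - y + y²/2) = 1 + y⁴/4`
  have hexp : exp (-y) * exp y = 1 := by rw [← exp_add, neg_add_cancel, exp_zero]
  nlinarith [mul_le_mul_of_nonneg_left (quadratic_le_exp_of_nonneg hy) (exp_pos (-y)).le,
    exp_pos (-y), pow_nonneg hy 4]

section Head

variable {ε : ℝ} (l : ℝ)

lemma intervalIntegrable_one_sub_exp_div_sq (hε : 0 < ε) (hε1 : ε ≤ 1) :
    IntervalIntegrable (fun t => (1 - exp (-(l * t))) / t ^ 2) volume ε 1 := by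
  refine ContinuousOn.intervalIntegrable ?_
  rw [uIcc_of_le hε1]
  exact ContinuousOn.div (by fun_prop) (by fun_prop) fun t ht => by
    have := hε.trans_le ht.1; positivity

lemma intervalIntegrable_const_mul_inv (hε : 0 < ε) :
    IntervalIntegrable (fun t => l * t⁻¹) volume ε 1 :=
  (intervalIntegral.intervalIntegrable_inv
    (fun _ ht => ((lt_min hε one_pos).trans_le ht.1).ne') continuousOn_id).const_mul l

lemma intervalIntegral_const_mul_inv (hε : 0 < ε) : ∫ t in ε..1, l * t⁻¹ = l * -log ε := by
  rw [intervalIntegral.integral_const_mul, integral_inv_of_pos hε one_pos, div_eq_inv_mul,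
    mul_one, log_inv]

lemma intervalIntegral_one_sub_exp_div_sq_le (hε : 0 < ε) (hε1 : ε ≤ 1) :
    ∫ t in ε..1, (1 - exp (-(l * t))) / t ^ 2 ≤ l * -log ε := by
  rw [← intervalIntegral_const_mul_inv l hε]
  refine intervalIntegral.integral_mono_on hε1 (intervalIntegrable_one_sub_exp_div_sq l hε hε1)
    (intervalIntegrable_const_mul_inv l hε) fun t ht => ?_
  have ht0 : 0 < t := hε.trans_le ht.1
  rw [div_le_iff₀ (by positivity)]
  calc 1 - exp (-(l * t)) ≤ l * t := one_sub_exp_neg_le _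
    _ = l * t⁻¹ * t ^ 2 := by field_simp

lemma le_intervalIntegral_one_sub_exp_div_sq (hε : 0 < ε) (hε1 : ε ≤ 1) (hl : 0 ≤ l) :
    l * -log ε - l ^ 2 / 2 ≤ ∫ t in ε..1, (1 - exp (-(l * t))) / t ^ 2 := by
  have hmono : ∫ t in ε..1, (l * t⁻¹ - l ^ 2 / 2) ≤
      ∫ t in ε..1, (1 - exp (-(l * t))) / t ^ 2 := by
    refine intervalIntegral.integral_mono_on hε1
      ((intervalIntegrable_const_mul_inv l hε).sub intervalIntegrable_const)
      (intervalIntegrable_one_sub_exp_div_sq l hε hε1) fun t ht => ?_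
    have ht0 : 0 < t := hε.trans_le ht.1
    rw [le_div_iff₀ (by positivity)]
    calc (l * t⁻¹ - l ^ 2 / 2) * t ^ 2 = l * t - l ^ 2 / 2 * t ^ 2 := by field_simp
      _ ≤ l * t - (l * t) ^ 2 / 2 := by nlinarith [sq_nonneg l, ht.2]
      _ ≤ 1 - exp (-(l * t)) := sub_sq_div_two_le_one_sub_exp_neg (by positivity)
  rw [intervalIntegral.integral_sub (intervalIntegrable_const_mul_inv l hε)
    intervalIntegrable_const, intervalIntegral_const_mul_inv l hε,
    intervalIntegral.integral_const, smul_eq_mul] at hmono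
  nlinarith [sq_nonneg l]

end Head

section Tail

variable {σ : ℝ} (l : ℝ)

lemma integral_Ioi_one_sub_exp_mul_rpow_nonneg (hl : 0 ≤ l) :
    0 ≤ ∫ t in Ioi (1 : ℝ), (1 - exp (-(l * t))) * t ^ (-1 - σ) :=
  setIntegral_nonneg measurableSet_Ioi fun t (ht : 1 < t) =>
    mul_nonneg (one_sub_exp_neg_nonneg (by positivity)) (rpow_nonneg (by positivity) _)

lemma integral_Ioi_one_sub_exp_mul_rpow_le (hσ : 0 < σ) (hl : 0 ≤ l) :
    ∫ t in Ioi (1 : ℝ), (1 - exp (-(l * t))) * t ^ (-1 - σ) ≤ σ⁻¹ := by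
  have hw : IntegrableOn (fun t : ℝ => t ^ (-1 - σ)) (Ioi 1) :=
    integrableOn_Ioi_rpow_of_lt (by linarith) one_pos
  have hw_int : ∫ t in Ioi (1 : ℝ), t ^ (-1 - σ) = σ⁻¹ := by
    rw [integral_Ioi_rpow_of_lt (by linarith) one_pos, one_rpow,
      show -1 - σ + 1 = -σ by ring, neg_div_neg_eq, one_div]
  rw [← hw_int]
  refine integral_mono_of_nonneg ?_ hw ?_ <;>
    filter_upwards [self_mem_ae_restrict measurableSet_Ioi] with t (ht : 1 < t)
  · exact mul_nonneg (one_sub_exp_neg_nonneg (by positivity)) (rpow_nonneg (by positivity) _)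
  · exact mul_le_of_le_one_left (rpow_nonneg (by positivity) _) (one_sub_exp_neg_le_one _)

end Tail

noncomputable def phiEpsSigma (ε σ l : ℝ) : ℝ :=
  |log ε|⁻¹ * ((∫ t in ε..1, (1 - exp (-(l * t))) / t ^ 2) +
    ∫ t in Ioi (1 : ℝ), (1 - exp (-(l * t))) * t ^ (-1 - σ))

lemma abs_sub_phiEpsSigma_le {ε σ l : ℝ} (hε : 0 < ε) (hε1 : ε < 1) (hσ : 0 < σ) (hl : 0 ≤ l) :
    |l - phiEpsSigma ε σ l| ≤ (2 * σ⁻¹ + l ^ 2) / (2 * |log ε|) := by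
  have head_le := intervalIntegral_one_sub_exp_div_sq_le l hε hε1.le
  have le_head := le_intervalIntegral_one_sub_exp_div_sq l hε hε1.le hl
  have tail_nonneg := integral_Ioi_one_sub_exp_mul_rpow_nonneg (σ := σ) l hl
  have tail_le := integral_Ioi_one_sub_exp_mul_rpow_le l hσ hl
  rw [phiEpsSigma, abs_of_neg (log_neg hε hε1)]
  generalize hL : -log ε = L at *
  generalize ∫ t in ε..1, (1 - exp (-(l * t))) / t ^ 2 = I at *
  generalize ∫ t in Ioi (1 : ℝ), (1 - exp (-(l * t))) * t ^ (-1 - σ) = J at *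
  have hL0 : 0 < L := hL ▸ neg_pos.mpr (log_neg hε hε1)
  have hdiff : l - L⁻¹ * (I + J) = (l * L - (I + J)) / L := by field_simp
  rw [hdiff, abs_div, abs_of_pos hL0, mul_comm, ← div_div]
  refine div_le_div_of_nonneg_right (abs_le.mpr ⟨?_, ?_⟩) hL0.le <;> linarith

lemma ContinuousLinearMap.finite_spectrum_real {H : Type*} [NormedAddCommGroup H]
    [NormedSpace ℂ H] [FiniteDimensional ℂ H] (A : H →L[ℂ] H) : (spectrum ℝ A).Finite := by
  rw [← spectrum.preimage_algebraMap ℂ, ContinuousLinearMap.spectrum_eq]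
  exact (Module.End.finite_spectrum _).preimage (FaithfulSMul.algebraMap_injective ℝ ℂ).injOn

lemma ContinuousLinearMap.IsPositive.spectrum_subset_Icc {H : Type*} [NormedAddCommGroup H]
    [InnerProductSpace ℂ H] [CompleteSpace H] {A : H →L[ℂ] H} (hA : A.IsPositive) :
    spectrum ℝ A ⊆ Icc 0 ‖A‖ := fun x hx =>
  ⟨spectrum_nonneg_of_nonneg ((ContinuousLinearMap.nonneg_iff_isPositive A).mpr hA) hx,
    (le_abs_self x).trans <| (spectrum.norm_le_norm_mul_of_mem hx).trans <|
      mul_le_of_le_one_right (norm_nonneg A) ContinuousLinearMap.norm_id_le⟩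

lemma IsSelfAdjoint.norm_sub_cfc_le {A : Type*} [CStarAlgebra A] {a : A} (ha : IsSelfAdjoint a)
    {f : ℝ → ℝ} {c : ℝ} (hf : ContinuousOn f (spectrum ℝ a)) (hc : 0 ≤ c)
    (h : ∀ x ∈ spectrum ℝ a, |x - f x| ≤ c) : ‖a - cfc f a‖ ≤ c := by
  have hsub : a - cfc f a = cfc (fun x => x - f x) a := by
    rw [cfc_sub (fun x : ℝ => x) f a continuousOn_id hf, cfc_id' ℝ a]
  rw [hsub]
  exact norm_cfc_le hc h

/-- For a positive self-adjoint operator `A` on a finite-dimensional complex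
Hilbert space, `0 < ε < 1` and `σ > 0`, the subordinated generator
`φ_{ε,σ}(A)` given by functional calculus of
`φ_{ε,σ}(λ) = |ln ε|⁻¹ (∫_ε^1 (1-e^{-λt}) t⁻² dt + ∫_1^∞ (1-e^{-λt}) t^{-1-σ} dt)`
satisfies `‖A - φ_{ε,σ}(A)‖ ≤ (2σ⁻¹ + ‖A‖²)/(2|ln ε|)`. -/
theorem stmt_18 {H : Type*} [NormedAddCommGroup H] [InnerProductSpace ℂ H]
    [FiniteDimensional ℂ H] (A : H →L[ℂ] H) (hA : IsSelfAdjoint A)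
    (hApos : ∀ x, 0 ≤ ((inner ℂ (A x) x : ℂ)).re)
    (ε σ : ℝ) (hε : 0 < ε) (hε1 : ε < 1) (hσ : 0 < σ) :
    ‖A - cfc (fun l : ℝ =>
        |Real.log ε|⁻¹ * ((∫ t in ε..1, (1 - Real.exp (-(l * t))) / t ^ 2) +
          ∫ t in Set.Ioi (1 : ℝ), (1 - Real.exp (-(l * t))) * t ^ (-1 - σ))) A‖ ≤
      (2 * σ⁻¹ + ‖A‖ ^ 2) / (2 * |Real.log ε|) := by
  have hspec : spectrum ℝ A ⊆ Icc 0 ‖A‖ :=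
    ContinuousLinearMap.IsPositive.spectrum_subset_Icc ⟨hA.isSymmetric, hApos⟩
  refine hA.norm_sub_cfc_le (f := phiEpsSigma ε σ) (A.finite_spectrum_real.continuousOn _)
    (by positivity) fun x hx => ?_
  obtain ⟨hx0, hxA⟩ := hspec hx
  calc |x - phiEpsSigma ε σ x| ≤ (2 * σ⁻¹ + x ^ 2) / (2 * |log ε|) :=
        abs_sub_phiEpsSigma_le hε hε1 hσ hx0
    _ ≤ (2 * σ⁻¹ + ‖A‖ ^ 2) / (2 * |log ε|) := by gcongr
end

section
/- For n ≥ 2, let y = (n/√(n-1)) Σ_{j=2}^n |11⟩⟨jj| in M_n(ℂ)⊗M_n(ℂ) with normalized trace τ = tr/n², and let E = E_N be the trace-preserving conditional expectation onto M_n⊗1 (partial trace over the second factor, normalized). Then τ(|y|² log |y|²) - τ(E(|y|²) log E(|y|²)) = 2 log n - log(n/(n-1)). -/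
/-!
Write `N = card k` and `ψ = ∑_{j ≠ i₀} |jj⟩`, so that `‖ψ‖² = N - 1`. Then `|y|² = N² P`, with `P`
the rank-one projection onto `ψ`, and `E(|y|²) = N/(N-1) Q`, with `Q = (1 - |i₀⟩⟨i₀|) ⊗ 1` a
projection of trace `N(N-1)`. For a projection `p` the spectrum of `r p` lies in `{0, r}`, so
`(r p) log (r p) = r log r · p`. Hence `τ(|y|² log |y|²) = log N²` and
`τ(E(|y|²) log E(|y|²)) = log (N/(N-1))`.
-/

open Matrix

theorem cfc_smul_of_isIdempotentElem {A : Type*} [Ring A] [StarRing A] [Algebra ℝ A]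
    [TopologicalSpace A] [ContinuousFunctionalCalculus ℝ A IsSelfAdjoint]
    [ContinuousMap.UniqueHom ℝ A] {p : A} (hp : IsIdempotentElem p) (hsa : IsSelfAdjoint p)
    (r : ℝ) {f : ℝ → ℝ} (hf : f 0 = 0) : cfc f (r • p) = f r • p := by
  have hcont : ContinuousOn f ((r * ·) '' spectrum ℝ p) :=
    ((hp.finite_spectrum ℝ).image _).continuousOn f
  rw [← cfc_comp_const_mul r f p, ← cfc_const_mul_id (f r) p]
  refine cfc_congr fun x hx => ?_
  rcases hp.spectrum_subset ℝ hx with rfl | rfl <;> simp [hf]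

section MatLog

variable {d : Type*} [Fintype d] [DecidableEq d] {p : Matrix d d ℂ}

theorem matLog_smul_of_isIdempotentElem (hp : IsIdempotentElem p) (hsa : IsSelfAdjoint p)
    (r : ℝ) : matLog (r • p) = Real.log r • p :=
  cfc_smul_of_isIdempotentElem hp hsa r Real.log_zero

theorem trace_smul_mul_matLog_smul (hp : IsIdempotentElem p) (hsa : IsSelfAdjoint p)
    (r : ℝ) {t : ℝ} (ht : p.trace = t) :
    (r • p * matLog (r • p)).trace = (r * Real.log r * t : ℝ) := by
  rw [matLog_smul_of_isIdempotentElem hp hsa, smul_mul_smul_comm, hp.eq, trace_smul, ht,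
    Complex.real_smul]
  push_cast; ring

noncomputable def tauMulLog (A : Matrix d d ℂ) : ℝ :=
  ((A * matLog A).trace / (Fintype.card d : ℂ)).re

theorem tauMulLog_smul (hp : IsIdempotentElem p) (hsa : IsSelfAdjoint p) (r : ℝ) {t : ℝ}
    (ht : p.trace = t) : tauMulLog (r • p) = r * Real.log r * t / Fintype.card d := by
  rw [tauMulLog, trace_smul_mul_matLog_smul hp hsa r ht, ← Complex.ofReal_natCast,
    Complex.div_ofReal_re, Complex.ofReal_re]

end MatLog

theorem conjTranspose_smul_vecMulVec_single_mul_self {ι κ : Type*} [Fintype ι] [DecidableEq ι]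
    (c : ℝ) (i : ι) (v : κ → ℂ) :
    (c • vecMulVec (Pi.single i 1) v)ᴴ * (c • vecMulVec (Pi.single i 1) v) =
      c ^ 2 • vecMulVec (star v) v := by
  simp [conjTranspose_smul, vecMulVec_mul_vecMulVec, smul_smul, sq]

theorem natCast_card_sub_one_ne_zero (k : Type*) [Fintype k] [Nontrivial k] :
    (Fintype.card k : ℂ) - 1 ≠ 0 := by
  rw [sub_ne_zero]; exact_mod_cast Fintype.one_lt_card.ne'

section Projections

open scoped Kronecker

variable {k m : Type*} [DecidableEq k] [DecidableEq m]

def entangledVec (i₀ : k) : k × k → ℂ := fun p => if p.1 = p.2 ∧ p.1 ≠ i₀ then 1 else 0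

theorem star_entangledVec (i₀ : k) : star (entangledVec i₀) = entangledVec i₀ := by
  ext p; simp only [entangledVec, Pi.star_apply]; split_ifs <;> simp

def complProjTensorOne (i₀ : k) : Matrix (k × m) (k × m) ℂ :=
  diagonal (fun i => if i = i₀ then 0 else 1) ⊗ₖ 1

theorem isSelfAdjoint_complProjTensorOne (i₀ : k) :
    IsSelfAdjoint (complProjTensorOne (m := m) i₀) := by
  rw [IsSelfAdjoint, star_eq_conjTranspose, complProjTensorOne, conjTranspose_kronecker,
    conjTranspose_one, diagonal_conjTranspose]
  congr; ext i; by_cases h : i = i₀ <;> simp [h]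

variable [Fintype k] [Fintype m]

theorem sum_ite_eq_zero_one (i₀ : k) :
    (∑ x : k, if x = i₀ then (0 : ℂ) else 1) = (Fintype.card k : ℂ) - 1 := by
  rw [Finset.sum_ite, Finset.sum_const_zero, zero_add, Finset.sum_const, Finset.filter_ne',
    Finset.card_erase_of_mem (Finset.mem_univ _), Finset.card_univ, nsmul_one,
    Nat.cast_pred (Fintype.card_pos_iff.mpr ⟨i₀⟩)]

theorem entangledVec_dotProduct_self (i₀ : k) :
    entangledVec i₀ ⬝ᵥ entangledVec i₀ = (Fintype.card k : ℂ) - 1 := by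
  rw [← sum_ite_eq_zero_one i₀, dotProduct, Fintype.sum_prod_type]
  refine Finset.sum_congr rfl fun a _ => ?_
  by_cases h : a = i₀ <;> simp [entangledVec, h]

noncomputable def entangledProj (i₀ : k) : Matrix (k × k) (k × k) ℂ :=
  ((Fintype.card k : ℂ) - 1)⁻¹ • vecMulVec (entangledVec i₀) (entangledVec i₀)

theorem isSelfAdjoint_entangledProj (i₀ : k) : IsSelfAdjoint (entangledProj i₀) := by
  simp [IsSelfAdjoint, entangledProj, star_eq_conjTranspose, star_entangledVec]

theorem isIdempotentElem_entangledProj [Nontrivial k] (i₀ : k) :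
    IsIdempotentElem (entangledProj i₀) := by
  have := natCast_card_sub_one_ne_zero k
  rw [IsIdempotentElem, entangledProj, smul_mul_smul_comm, vecMulVec_mul_vecMulVec,
    entangledVec_dotProduct_self, vecMulVec_smul, smul_smul, inv_mul_cancel_right₀ this]

theorem trace_entangledProj [Nontrivial k] (i₀ : k) : (entangledProj i₀).trace = (1 : ℝ) := by
  have := natCast_card_sub_one_ne_zero k
  rw [entangledProj, trace_smul, trace_vecMulVec, entangledVec_dotProduct_self, smul_eq_mul,
    inv_mul_cancel₀ this, Complex.ofReal_one]

theorem isIdempotentElem_complProjTensorOne (i₀ : k) :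
    IsIdempotentElem (complProjTensorOne (m := m) i₀) := by
  rw [IsIdempotentElem, complProjTensorOne, ← mul_kronecker_mul, diagonal_mul_diagonal, one_mul]
  congr; ext i; by_cases h : i = i₀ <;> simp [h]

theorem trace_complProjTensorOne (i₀ : k) :
    (complProjTensorOne (m := m) i₀).trace =
      (((Fintype.card k : ℝ) - 1) * Fintype.card m : ℝ) := by
  rw [complProjTensorOne, trace_kronecker, trace_diagonal, sum_ite_eq_zero_one, trace_one]
  push_cast; rfl

noncomputable def condExpTensorOne (ρ : Matrix (k × m) (k × m) ℂ) : Matrix (k × m) (k × m) ℂ :=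
  of fun p q => if p.2 = q.2 then (Fintype.card m : ℂ)⁻¹ * ∑ c, ρ (p.1, c) (q.1, c) else 0

theorem condExpTensorOne_smul_vecMulVec_entangledVec (t : ℝ) (i₀ : k) :
    condExpTensorOne (t • vecMulVec (entangledVec i₀) (entangledVec i₀)) =
      (t / Fintype.card k : ℂ) • complProjTensorOne i₀ := by
  ext ⟨a, b⟩ ⟨a', b'⟩
  simp only [condExpTensorOne, complProjTensorOne, of_apply, Matrix.smul_apply, vecMulVec_apply,
    entangledVec, kronecker_apply, diagonal_apply, one_apply]
  obtain rfl | ha := eq_or_ne a a' <;> by_cases hb : b = b' <;> by_cases h0 : a = i₀ <;>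
    simp [*, ite_and, div_eq_inv_mul, Complex.real_smul]

end Projections

section Rothaus

variable {k : Type*} [Fintype k] [DecidableEq k]

noncomputable def rothausY (i₀ : k) : Matrix (k × k) (k × k) ℂ :=
  (Fintype.card k / √(Fintype.card k - 1) : ℝ) •
    vecMulVec (Pi.single (i₀, i₀) 1) (entangledVec i₀)

variable [Nontrivial k] (i₀ : k)

theorem conjTranspose_rothausY_mul_self_eq_smul_vecMulVec :
    (rothausY i₀)ᴴ * rothausY i₀ = ((Fintype.card k : ℝ) ^ 2 / (Fintype.card k - 1)) •
      vecMulVec (entangledVec i₀) (entangledVec i₀) := by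
  have : (1 : ℝ) < Fintype.card k := by exact_mod_cast Fintype.one_lt_card
  rw [rothausY, conjTranspose_smul_vecMulVec_single_mul_self, star_entangledVec, div_pow,
    Real.sq_sqrt (by linarith)]

theorem conjTranspose_rothausY_mul_self :
    (rothausY i₀)ᴴ * rothausY i₀ = ((Fintype.card k : ℝ) ^ 2) • entangledProj i₀ := by
  rw [conjTranspose_rothausY_mul_self_eq_smul_vecMulVec, entangledProj, ← Complex.coe_smul,
    ← Complex.coe_smul, smul_smul]
  push_cast
  rw [div_eq_mul_inv]

theorem condExpTensorOne_conjTranspose_rothausY_mul_self :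
    condExpTensorOne ((rothausY i₀)ᴴ * rothausY i₀) =
      ((Fintype.card k : ℝ) / (Fintype.card k - 1)) • complProjTensorOne i₀ := by
  rw [conjTranspose_rothausY_mul_self_eq_smul_vecMulVec,
    condExpTensorOne_smul_vecMulVec_entangledVec, ← Complex.coe_smul]
  push_cast
  congr 1
  field_simp

theorem tauMulLog_conjTranspose_rothausY_mul_self :
    tauMulLog ((rothausY i₀)ᴴ * rothausY i₀) = 2 * Real.log (Fintype.card k) := by
  rw [conjTranspose_rothausY_mul_self, tauMulLog_smul (isIdempotentElem_entangledProj i₀)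
    (isSelfAdjoint_entangledProj i₀) _ (trace_entangledProj i₀), Real.log_pow,
    Fintype.card_prod]
  push_cast
  field_simp

theorem tauMulLog_condExpTensorOne_conjTranspose_rothausY_mul_self :
    tauMulLog (condExpTensorOne ((rothausY i₀)ᴴ * rothausY i₀)) =
      Real.log (Fintype.card k / (Fintype.card k - 1)) := by
  have : (Fintype.card k : ℝ) - 1 ≠ 0 := by
    rw [sub_ne_zero]; exact_mod_cast Fintype.one_lt_card.ne'
  rw [condExpTensorOne_conjTranspose_rothausY_mul_self, tauMulLog_smul
    (isIdempotentElem_complProjTensorOne i₀) (isSelfAdjoint_complProjTensorOne i₀) _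
    (trace_complProjTensorOne i₀), Fintype.card_prod]
  push_cast
  field_simp

end Rothaus

/-- Failure of the Rothaus lemma data: for `N = n + 2 ≥ 2`, the rank-one
element `y = (N/√(N-1)) Σ_{j≠0} |00⟩⟨jj|` of `M_N ⊗ M_N` with normalized
trace `τ = tr/N²` and conditional expectation `E` onto `M_N ⊗ 1`
(normalized partial trace over the second factor) satisfies
`τ(|y|² log|y|²) - τ(E(|y|²) log E(|y|²)) = 2 log N - log (N/(N-1))`. -/
theorem stmt_19 (n : ℕ)
    (y : Matrix (Fin (n + 2) × Fin (n + 2)) (Fin (n + 2) × Fin (n + 2)) ℂ)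
    (hy : ∀ p q, y p q =
      if p.1 = 0 ∧ p.2 = 0 ∧ q.1 = q.2 ∧ q.1 ≠ 0 then
        ((((n + 2 : ℕ) : ℝ) / Real.sqrt ((n + 2 : ℕ) - 1) : ℝ) : ℂ) else 0)
    (E : Matrix (Fin (n + 2) × Fin (n + 2)) (Fin (n + 2) × Fin (n + 2)) ℂ →
         Matrix (Fin (n + 2) × Fin (n + 2)) (Fin (n + 2) × Fin (n + 2)) ℂ)
    (hE : ∀ ρ p q, E ρ p q =
      if p.2 = q.2 then ((n + 2 : ℕ) : ℂ)⁻¹ * ∑ c : Fin (n + 2), ρ (p.1, c) (q.1, c)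
      else 0) :
    ((yᴴ * y * matLog (yᴴ * y)).trace / ((n + 2 : ℕ) ^ 2 : ℂ)).re -
      ((E (yᴴ * y) * matLog (E (yᴴ * y))).trace / ((n + 2 : ℕ) ^ 2 : ℂ)).re =
      2 * Real.log ((n + 2 : ℕ) : ℝ) -
        Real.log (((n + 2 : ℕ) : ℝ) / (((n + 2 : ℕ) : ℝ) - 1)) := by
  have hy' : y = rothausY 0 := by
    ext p q
    simp only [hy, rothausY, Fintype.card_fin, Matrix.smul_apply, vecMulVec_apply,
      Pi.single_apply, entangledVec, Prod.ext_iff]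
    split_ifs <;> simp_all [Complex.real_smul]
  have hE' : E = condExpTensorOne := by
    funext ρ; ext p q; rw [hE]; simp [condExpTensorOne]
  have hτ (A : Matrix (Fin (n + 2) × Fin (n + 2)) (Fin (n + 2) × Fin (n + 2)) ℂ) :
      ((A * matLog A).trace / ((n + 2 : ℕ) ^ 2 : ℂ)).re = tauMulLog A := by
    simp [tauMulLog, sq]
  subst hy' hE'
  rw [hτ, hτ, tauMulLog_conjTranspose_rothausY_mul_self,
    tauMulLog_condExpTensorOne_conjTranspose_rothausY_mul_self, Fintype.card_fin]
end
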